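/- arXiv:1011.1611 — 8 statements merged into one kernel-verified Lean document; each statement's English description precedes it below -/
import Mathlib

section
/- For every covering map p : X̃ → X with p(x̃) = x, the small loop group π₁ˢ(X, x) is contained in the image p₋(π₁(X̃, x̃)) of the fundamental group of the covering space. -/
open CategoryTheory Topology

attribute [local instance] Path.Homotopic.setoid

noncomputable section

variable {X Y E : Type*} [TopologicalSpace X] [TopologicalSpace Y] [TopologicalSpace E]

/-- Build an element of the fundamental group from a homotopy class of loops. -/
def fromLoop {x : X} (p : Path.Homotopic.Quotient x x) : FundamentalGroup X x :=
  FundamentalGroup.fromPath p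

/-- The homotopy class of loops underlying an element of the fundamental group. -/
def toLoop {x : X} (γ : FundamentalGroup X x) : Path.Homotopic.Quotient x x :=
  FundamentalGroup.toPath γ

/-- A fundamental group element is *small* if it has a loop representative inside every
neighborhood of the basepoint. -/
def IsSmall {x : X} (γ : FundamentalGroup X x) : Prop :=
  ∀ U ∈ nhds x, ∃ δ : Path x x, (∀ t, δ t ∈ U) ∧ fromLoop ⟦δ⟧ = γ

/-- The set of small loop classes, i.e. the carrier of the small loop group `π₁ˢ(X,x)`. -/
def smallSet (X : Type*) [TopologicalSpace X] (x : X) : Set (FundamentalGroup X x) :=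
  {γ | IsSmall γ}

/-- Conjugate of a loop class at `y` by a path `α` from `x` to `y`: `α * β * α⁻¹`. -/
def conjPath {x y : X} (α : Path x y) (β : FundamentalGroup X y) : FundamentalGroup X x :=
  fromLoop (Path.Homotopic.Quotient.trans
    (Path.Homotopic.Quotient.trans (⟦α⟧ : Path.Homotopic.Quotient x y) (toLoop β))
    (⟦α.symm⟧ : Path.Homotopic.Quotient y x))

/-- The SG subgroup `π₁ˢᵍ(X,x)`: generated by conjugates of small loop classes. -/
def sgSubgroup (X : Type*) [TopologicalSpace X] (x : X) : Subgroup (FundamentalGroup X x) :=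
  Subgroup.closure {g | ∃ (y : X) (α : Path x y) (β : FundamentalGroup X y), IsSmall β ∧ g = conjPath α β}

/-- The map induced on fundamental groups by a continuous map. -/
def piMap (f : C(X, Y)) (x : X) (γ : FundamentalGroup X x) : FundamentalGroup Y (f x) :=
  fromLoop (Path.Homotopic.Quotient.map (toLoop γ) f)

/-- A small loop space: a path-connected, non-simply connected space all of whose loops
are small. -/
def IsSmallLoopSpace (X : Type*) [TopologicalSpace X] : Prop :=
  PathConnectedSpace X ∧ ¬ SimplyConnectedSpace X ∧
    ∀ (x : X) (γ : FundamentalGroup X x), IsSmall γ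

/-- A space is homotopically Hausdorff if every nontrivial loop class can be kept away from
some neighborhood of its basepoint. -/
def HomotopicallyHausdorff (X : Type*) [TopologicalSpace X] : Prop :=
  ∀ (x : X) (γ : FundamentalGroup X x), γ ≠ 1 →
    ∃ U ∈ nhds x, ∀ δ : Path x x, (∀ t, δ t ∈ U) → fromLoop ⟦δ⟧ ≠ γ

/-- The image of `π₁(U,y) → π₁(X,y)`: classes of loops having a representative inside `U`. -/
def loopsIn (U : Set X) (y : X) : Set (FundamentalGroup X y) :=
  {γ | ∃ δ : Path y y, (∀ t, δ t ∈ U) ∧ fromLoop ⟦δ⟧ = γ}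

/-- A semi-locally small loop space. -/
def SemiLocallySmallLoop (X : Type*) [TopologicalSpace X] : Prop :=
  ∀ x : X, ∃ U : Set X, IsOpen U ∧ x ∈ U ∧ ∀ y ∈ U, loopsIn U y = smallSet X y


/-! A small loop class at `p xt` has a representative inside an evenly covered neighbourhood of
`p xt`, and a path inside the base set of a trivialization lifts, through the trivialization, to
a path in a single sheet; so the representative lifts to a loop at `xt`. -/

namespace Bundle.Trivialization

variable {B F Z : Type*} [TopologicalSpace B] [TopologicalSpace F] [TopologicalSpace Z]
  {proj : Z → B}

theorem exists_path_map_eq (T : Trivialization F proj) (hproj : Continuous proj) {e e' : Z}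
    (hsheet : (T e).2 = (T e').2) (γ : Path (proj e) (proj e')) (hγ : ∀ t, γ t ∈ T.baseSet) :
    ∃ γ' : Path e e', γ'.map hproj = γ := by
  refine ⟨{ toFun t := T.toOpenPartialHomeomorph.symm (γ t, (T e).2)
            continuous_toFun := T.continuousOn_symm_prodMk_left.comp_continuous γ.continuous hγ
            source' := ?_
            target' := ?_ }, ?_⟩
  · simpa only [γ.source] using T.symm_apply_mk_proj (T.mem_source.2 (γ.source ▸ hγ 0))
  · simpa only [γ.target, hsheet] using T.symm_apply_mk_proj (T.mem_source.2 (γ.target ▸ hγ 1))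
  · ext t
    exact T.proj_symm_apply' (hγ t)

end Bundle.Trivialization

theorem piMap_fromLoop_mk (f : C(X, Y)) {x : X} (γ : Path x x) :
    piMap f x (fromLoop ⟦γ⟧) = fromLoop ⟦γ.map f.continuous⟧ :=
  rfl

theorem smallSet_subset_loopsIn {x : X} {U : Set X} (hU : U ∈ 𝓝 x) : smallSet X x ⊆ loopsIn U x :=
  fun _ hγ ↦ hγ U hU

theorem loopsIn_baseSet_subset_range_piMap {p : C(E, X)} {F : Type*} [TopologicalSpace F]
    (T : Bundle.Trivialization F p) (e : E) : loopsIn T.baseSet (p e) ⊆ Set.range (piMap p e) := by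
  rintro _ ⟨δ, hδ, rfl⟩
  obtain ⟨δ', hδ'⟩ := T.exists_path_map_eq p.continuous rfl δ hδ
  exact ⟨fromLoop ⟦δ'⟧, by rw [piMap_fromLoop_mk, hδ']⟩

/-- for every covering map `p : X̃ → X` with `p xt = x`, the small loop group
`π₁ˢ(X,x)` is contained in the image `p₋(π₁(X̃, xt))`. -/
theorem smallSet_subset_range_piMap {E X : Type*} [TopologicalSpace E] [TopologicalSpace X]
    (p : C(E, X)) (hp : IsCoveringMap p) (xt : E) :
    smallSet X (p xt) ⊆ Set.range (piMap p xt) := by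
  have : Nonempty (p ⁻¹' {p xt}) := ⟨⟨xt, rfl⟩⟩
  let T := (hp (p xt)).toTrivialization
  have hT : T.baseSet ∈ 𝓝 (p xt) :=
    T.open_baseSet.mem_nhds (hp (p xt)).mem_toTrivialization_baseSet
  exact (smallSet_subset_loopsIn hT).trans (loopsIn_baseSet_subset_range_piMap T xt)

end
end

section
/- For every covering map p : X̃ → X with p(x̃) = x, the SG subgroup π₁ˢᵍ(X, x) is contained in p₋(π₁(X̃, x̃)). -/
open CategoryTheory Topology

attribute [local instance] Path.Homotopic.setoid

noncomputable section

variable {X Y E : Type*} [TopologicalSpace X] [TopologicalSpace Y] [TopologicalSpace E]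

/-! A small loop at `y` has a representative inside an evenly covered neighbourhood of `y`, so it
lifts to a loop at every point of the fibre over `y`: its monodromy is trivial. Monodromy is
functorial, so each conjugate `α * β * α⁻¹` also acts trivially on the fibre over `x`, hence
so does all of `π₁ˢᵍ(X,x)`. Finally, a loop at `p x̃` whose monodromy fixes `x̃` lifts to a
loop at `x̃`, i.e. lies in the image of `p₋`. -/

theorem Bundle.Trivialization.exists_loop_lift_of_mem_baseSet {p : E → X} {F : Type*}
    [TopologicalSpace F] (T : Bundle.Trivialization F p) {e : E} (δ : Path (p e) (p e))
    (hδ : ∀ t, δ t ∈ T.baseSet) : ∃ δ' : Path e e, ∀ t, p (δ' t) = δ t := by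
  have he : e ∈ T.source := T.mem_source.2 (δ.source ▸ hδ 0)
  let lift : unitInterval → E := fun t ↦ T.toOpenPartialHomeomorph.symm (δ t, (T e).2)
  have lift_cont : Continuous lift :=
    T.toOpenPartialHomeomorph.continuousOn_symm.comp_continuous
      (δ.continuous.prodMk continuous_const) fun t ↦ by rw [T.target_eq]; exact ⟨hδ t, trivial⟩
  have lift_eq (t) (ht : δ t = p e) : lift t = e := by
    simp only [lift, ht]
    rw [T.mk_proj_snd he]
    exact T.left_inv he
  exact ⟨⟨⟨lift, lift_cont⟩, lift_eq 0 δ.source, lift_eq 1 δ.target⟩,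
    fun t ↦ T.proj_symm_apply' (hδ t)⟩

namespace IsCoveringMap

variable {p : E → X} (cov : IsCoveringMap p)

theorem mem_range_map_of_monodromy_eq {e : E} {γ : FundamentalGroup X (p e)}
    (h : cov.monodromy γ ⟨e, rfl⟩ = ⟨e, rfl⟩) :
    γ ∈ (FundamentalGroup.map ⟨p, cov.continuous⟩ e).range := by
  refine ⟨(cov.liftPathQuotient γ ⟨e, rfl⟩).cast rfl (congrArg Subtype.val h).symm, ?_⟩
  rw [FundamentalGroup.map_apply, Path.Homotopic.Quotient.map_cast, map_liftPathQuotient]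
  exact (Path.Homotopic.Quotient.cast_cast ..).trans (Path.Homotopic.Quotient.cast_rfl_rfl _)

theorem mem_ker_monodromyPerm_of_isSmall {y : X} {β : FundamentalGroup X y} (hβ : IsSmall β) :
    β ∈ (cov.monodromyPerm y).ker := by
  refine Equiv.ext fun ⟨e, he⟩ ↦ ?_
  obtain rfl : p e = y := he
  have : Nonempty (p ⁻¹' {p e}) := ⟨⟨e, rfl⟩⟩
  have hev := cov (p e)
  let T := hev.toTrivialization
  obtain ⟨δ, hδT, rfl⟩ :=
    hβ T.baseSet (T.open_baseSet.mem_nhds hev.mem_toTrivialization_baseSet)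
  obtain ⟨δ', hδ'⟩ := T.exists_loop_lift_of_mem_baseSet δ hδT
  have hmap : δ'.map cov.continuous = δ := Path.ext (funext hδ')
  have := cov.monodromy_map (.mk δ')
  rwa [← Path.Homotopic.Quotient.mk_map, hmap] at this

theorem conjPath_mem_ker_monodromyPerm {x y : X} (α : Path x y) {β : FundamentalGroup X y}
    (hβ : β ∈ (cov.monodromyPerm y).ker) : conjPath α β ∈ (cov.monodromyPerm x).ker := by
  have hβ' (e : p ⁻¹' {y}) : cov.monodromy β e = e := DFunLike.congr_fun hβ e
  refine Equiv.ext fun e ↦ ?_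
  change cov.monodromy (((Path.Homotopic.Quotient.mk α).trans β).trans (.mk α.symm)) e = e
  rw [monodromy_trans_apply, monodromy_trans_apply, hβ', ← monodromy_trans_apply,
    Path.Homotopic.Quotient.mk_symm, Path.Homotopic.Quotient.trans_symm, monodromy_refl, id]

end IsCoveringMap

/-- for every covering map `p : X̃ → X` with `p xt = x`, the SG subgroup
`π₁ˢᵍ(X,x)` is contained in the image `p₋(π₁(X̃, xt))`. -/
theorem sgSubgroup_subset_range_piMap {E X : Type*} [TopologicalSpace E] [TopologicalSpace X]
    (p : C(E, X)) (hp : IsCoveringMap p) (xt : E) :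
    (sgSubgroup X (p xt) : Set (FundamentalGroup X (p xt))) ⊆ Set.range (piMap p xt) := by
  have hSG : sgSubgroup X (p xt) ≤ (hp.monodromyPerm (p xt)).ker :=
    (Subgroup.closure_le _).2 fun _ ⟨_, α, _, hβ, hg⟩ ↦
      hg ▸ hp.conjPath_mem_ker_monodromyPerm α (hp.mem_ker_monodromyPerm_of_isSmall hβ)
  exact fun γ hγ ↦ hp.mem_range_map_of_monodromy_eq (DFunLike.congr_fun (hSG hγ) ⟨xt, rfl⟩)

end
end

section
/- For any covering map p : X̃ → X and x ∈ X, every element of the SG subgroup π₁ˢᵍ(X,x) acts trivially on the fiber p⁻¹(x) under the monodromy action of π₁(X,x). -/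
open CategoryTheory Topology

attribute [local instance] Path.Homotopic.setoid

noncomputable section

variable {X Y E : Type*} [TopologicalSpace X] [TopologicalSpace Y] [TopologicalSpace E]

/-!
A small loop at `y` has a representative inside an evenly covered neighbourhood of `y`, and a
loop there lifts inside a single sheet, so all its lifts are closed: its monodromy is trivial.
Conjugating by a path `α` keeps the monodromy trivial, since that of `α⁻¹` undoes that of `α`.
Hence the generators of `π₁ˢᵍ(X,x)`, and so the whole subgroup, lie in the kernel of the
monodromy action.
-/

namespace IsCoveringMap

variable {E X : Type*} [TopologicalSpace E] [TopologicalSpace X] {p : E → X}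
  (hp : IsCoveringMap p)
include hp

theorem coe_monodromy_mk_of_lift {x y : X} (σ : Path x y) {e : E} (he : p e = x)
    {Γ : C(unitInterval, E)} (hΓ : ∀ t, p (Γ t) = σ t) (hΓ0 : Γ 0 = e) :
    (hp.monodromy ⟦σ⟧ ⟨e, he⟩ : E) = Γ 1 := by
  rw [(hp.eq_liftPath_iff' _).mpr ⟨funext hΓ, hΓ0⟩]
  rfl

theorem monodromy_eq_id_of_forall_mem_baseSet {F : Type*} [TopologicalSpace F]
    (T : Bundle.Trivialization F p) {y : X} (δ : Path y y) (hδ : ∀ t, δ t ∈ T.baseSet) :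
    hp.monodromy ⟦δ⟧ = id := by
  funext ⟨e, he⟩
  have he' : p e = y := he
  let Γ : C(unitInterval, E) :=
    ⟨fun t => T.toOpenPartialHomeomorph.symm (δ t, (T e).2),
      T.toOpenPartialHomeomorph.continuousOn_symm.comp_continuous
        (δ.continuous.prodMk continuous_const) fun t => T.mem_target.2 (hδ t)⟩
  have hΓ : ∀ t, p (Γ t) = δ t := fun t => T.proj_symm_apply (T.mem_target.2 (hδ t))
  have hΓ_of_eq : ∀ t, δ t = y → Γ t = e := by
    intro t ht
    have hsrc : e ∈ T.source := T.mem_source.2 (he'.symm ▸ ht ▸ hδ t)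
    change T.toOpenPartialHomeomorph.symm (δ t, (T e).2) = e
    rw [ht, ← he', T.mk_proj_snd hsrc]
    exact T.toOpenPartialHomeomorph.left_inv hsrc
  exact Subtype.ext <|
    (hp.coe_monodromy_mk_of_lift δ he' hΓ (hΓ_of_eq 0 δ.source)).trans (hΓ_of_eq 1 δ.target)

theorem monodromy_eq_id_of_isSmall {y : X} {β : FundamentalGroup X y} (hβ : IsSmall β) :
    hp.monodromy β = id := by
  rcases isEmpty_or_nonempty (p ⁻¹' {y}) with hempty | hnonempty
  · exact funext fun e => isEmptyElim e
  · let T := (hp y).toTrivialization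
    obtain ⟨δ, hδ, rfl⟩ :=
      hβ T.baseSet (T.open_baseSet.mem_nhds (hp y).mem_toTrivialization_baseSet)
    exact hp.monodromy_eq_id_of_forall_mem_baseSet T δ hδ

theorem monodromy_conjPath_eq_id {x y : X} (α : Path x y) {β : FundamentalGroup X y}
    (hβ : hp.monodromy β = id) : hp.monodromy (conjPath α β) = id := by
  funext e
  change hp.monodromy ((Path.Homotopic.Quotient.mk α |>.trans (toLoop β)).trans
    (Path.Homotopic.Quotient.mk α).symm) e = e
  rw [hp.monodromy_trans_apply, hp.monodromy_trans_apply]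
  change hp.monodromy _ (hp.monodromy β _) = e
  rw [hβ, id, ← hp.monodromy_trans_apply, Path.Homotopic.Quotient.trans_symm, hp.monodromy_refl,
    id]

theorem sgSubgroup_le_ker_monodromyPerm (x : X) :
    sgSubgroup X x ≤ (hp.monodromyPerm x).ker := by
  refine (Subgroup.closure_le _).2 ?_
  rintro _ ⟨y, α, β, hβ, rfl⟩
  exact DFunLike.ext' (hp.monodromy_conjPath_eq_id α (hp.monodromy_eq_id_of_isSmall hβ))

end IsCoveringMap

/-- every element of `π₁ˢᵍ(X,x)` acts trivially on the fiber `p⁻¹(x)` under the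
monodromy action: the lift of any representing loop starting at any point of the fiber is
closed. -/
theorem sgSubgroup_acts_trivially_on_fiber {E X : Type*} [TopologicalSpace E]
    [TopologicalSpace X] (p : C(E, X)) (hp : IsCoveringMap p) (x : X)
    (γ : FundamentalGroup X x) (hγ : γ ∈ sgSubgroup X x)
    (σ : Path x x) (hσ : fromLoop ⟦σ⟧ = γ)
    (xt : E) (hxt : p xt = x)
    (sigt : C(unitInterval, E)) (hlift : ∀ t, p (sigt t) = σ t) (h0 : sigt 0 = xt) :
    sigt 1 = xt := by
  have hfixed : hp.monodromy γ ⟨xt, hxt⟩ = ⟨xt, hxt⟩ :=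
    DFunLike.congr_fun (MonoidHom.mem_ker.1 (hp.sgSubgroup_le_ker_monodromyPerm x hγ)) _
  subst hσ
  rw [← hp.coe_monodromy_mk_of_lift σ hxt hlift h0]
  exact congrArg Subtype.val hfixed

end
end

section
/- Every covering space of a small loop space X is a one-sheeted covering, i.e., the covering map is a homeomorphism onto X. -/
open CategoryTheory Topology

attribute [local instance] Path.Homotopic.setoid

noncomputable section

variable {X Y E : Type*} [TopologicalSpace X] [TopologicalSpace Y] [TopologicalSpace E]

/-! Every loop of `X` acts on the fibres of a covering by monodromy. A loop inside an evenly
covered neighbourhood lifts into a single sheet, so it acts trivially; since every loop of a small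
loop space is homotopic to such a loop, the monodromy action is trivial. As `E` is path-connected,
two points of a fibre are the endpoints of the lift of a loop, hence equal. Surjectivity holds
because the image of a covering map is clopen. -/

namespace IsCoveringMap

variable {E X : Type*} [TopologicalSpace E] [TopologicalSpace X] {p : E → X}

theorem isClosed_range (cov : IsCoveringMap p) : IsClosed (Set.range p) := by
  refine isOpen_compl_iff.mp (isOpen_iff_forall_mem_open.mpr fun x hx => ?_)
  obtain ⟨-, U, hxU, hU, -, H, -⟩ := cov x
  refine ⟨U, ?_, hU, hxU⟩
  rintro y hyU ⟨e, rfl⟩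
  exact hx ⟨_, (H ⟨e, hyU⟩).2.2⟩

theorem surjective [ConnectedSpace X] [Nonempty E] (cov : IsCoveringMap p) :
    Function.Surjective p :=
  Set.range_eq_univ.mp <| IsClopen.eq_univ ⟨cov.isClosed_range, cov.isOpenMap.isOpen_range⟩
    (Set.range_nonempty p)

theorem monodromy_eq_self_of_mem_baseSet (cov : IsCoveringMap p) {F : Type*} [TopologicalSpace F]
    (T : Bundle.Trivialization F p) {x : X} {δ : Path x x} (hδ : ∀ t, δ t ∈ T.baseSet)
    (e : p ⁻¹' {x}) : cov.monodromy (.mk δ) e = e := by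
  have hpe : p e = x := e.2
  have he : (e : E) ∈ T.source := T.mem_source.mpr (by simpa [hpe] using hδ 0)
  have htarget : ∀ t, (δ t, (T e).2) ∈ T.target := fun t => by
    rw [T.target_eq]; exact ⟨hδ t, trivial⟩
  have hsymm : T.toOpenPartialHomeomorph.symm (x, (T e).2) = e := by
    simpa [hpe] using T.symm_apply_mk_proj he
  let Γ : Path (e : E) e :=
    { toFun := fun t => T.toOpenPartialHomeomorph.symm (δ t, (T e).2)
      continuous_toFun := T.continuousOn_invFun.comp_continuous (by fun_prop) htarget
      source' := by simpa using hsymm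
      target' := by simpa using hsymm }
  refine cov.monodromy_eq_of_map_eq (.mk Γ) ?_
  refine congrArg Path.Homotopic.Quotient.mk (Path.ext (funext fun t => ?_))
  exact T.proj_symm_apply (htarget t)

theorem monodromy_eq_self_of_isSmall (cov : IsCoveringMap p) {x : X}
    {γ : FundamentalGroup X x} (hγ : IsSmall γ) (e : p ⁻¹' {x}) :
    cov.monodromy (toLoop γ) e = e := by
  have : Nonempty (p ⁻¹' {x}) := ⟨e⟩
  let T := (cov x).toTrivialization
  obtain ⟨δ, hδ, rfl⟩ := hγ _ (T.open_baseSet.mem_nhds (cov x).mem_toTrivialization_baseSet)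
  exact cov.monodromy_eq_self_of_mem_baseSet T hδ e

theorem injective_of_monodromy_eq_self [PathConnectedSpace E] (cov : IsCoveringMap p)
    (h : ∀ (x : X) (γ : Path.Homotopic.Quotient x x) (e : p ⁻¹' {x}), cov.monodromy γ e = e) :
    Function.Injective p := by
  intro e₁ e₂ he
  obtain ⟨α⟩ := PathConnectedSpace.joined e₁ e₂
  have hα := cov.monodromy_eq_of_map_eq (ex := ⟨e₁, rfl⟩) (ey := ⟨e₂, he.symm⟩)
    (γ := ((Path.Homotopic.Quotient.mk α).map ⟨p, cov.continuous⟩).cast rfl he) (.mk α) rfl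
  rw [h] at hα
  exact congrArg Subtype.val hα

end IsCoveringMap

/-- every covering of a small loop space is one-sheeted, i.e. the covering map
is a homeomorphism onto `X`. -/
theorem covering_of_smallLoopSpace_isHomeomorph {E X : Type*} [TopologicalSpace E]
    [TopologicalSpace X] [PathConnectedSpace E] (hX : IsSmallLoopSpace X)
    (p : C(E, X)) (hp : IsCoveringMap p) :
    IsHomeomorph p := by
  obtain ⟨_, -, hsmall⟩ := hX
  have : Nonempty E := PathConnectedSpace.nonempty
  refine ⟨p.continuous, hp.isOpenMap, hp.injective_of_monodromy_eq_self fun x γ => ?_,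
    hp.surjective⟩
  exact hp.monodromy_eq_self_of_isSmall (hsmall x (FundamentalGroup.fromPath γ))
end
end

section
/- Let p : X̃ → X be a covering map where X̃ is a small loop space. Then a loop α at x ∈ X is small if and only if some lift of α to X̃ is a closed loop. -/
open CategoryTheory Topology

attribute [local instance] Path.Homotopic.setoid

noncomputable section

variable {X Y E : Type*} [TopologicalSpace X] [TopologicalSpace Y] [TopologicalSpace E]

/-! A loop inside a neighbourhood of `p e` on which `p` has a local inverse lifts to a closed loop
at `e`, and homotopic loops have lifts from `e` with the same endpoint; so a small loop, being
homotopic to such a loop, has a closed lift. Conversely, the image of a closed lift of `α` is a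
small loop since every loop of `X̃` is small and continuous maps preserve small loops. -/

theorem fromLoop_mk_eq_iff {x : X} {γ δ : Path x x} :
    fromLoop ⟦γ⟧ = fromLoop ⟦δ⟧ ↔ γ.Homotopic δ :=
  Quotient.eq

theorem IsSmall.map {e : E} {γ : Path e e} (h : IsSmall (fromLoop ⟦γ⟧)) (f : C(E, X)) :
    IsSmall (fromLoop ⟦γ.map f.continuous⟧) := by
  intro U hU
  obtain ⟨δ, hδU, hδγ⟩ := h _ (f.continuous.continuousAt.preimage_mem_nhds hU)
  exact ⟨δ.map f.continuous, hδU, fromLoop_mk_eq_iff.2 ((fromLoop_mk_eq_iff.1 hδγ).map f)⟩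

theorem IsLocalHomeomorph.exists_mem_nhds_forall_loop_lifts {p : E → X}
    (hp : IsLocalHomeomorph p) (e : E) :
    ∃ U ∈ 𝓝 (p e), ∀ δ : Path (p e) (p e), (∀ t, δ t ∈ U) →
      ∃ Δ : Path e e, ∀ t, p (Δ t) = δ t := by
  obtain ⟨φ, heφ, rfl⟩ := hp e
  refine ⟨φ.target, φ.open_target.mem_nhds (φ.map_source heφ), fun δ hδ => ?_⟩
  let Δ : C(unitInterval, E) := ⟨fun t => φ.symm (δ t), φ.continuousOn_symm.comp_continuous δ.continuous hδ⟩
  exact ⟨⟨Δ, by simp [Δ, φ.left_inv heφ], by simp [Δ, φ.left_inv heφ]⟩,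
    fun t => φ.right_inv (hδ t)⟩

theorem IsCoveringMap.exists_path_lifts_of_homotopic {p : E → X} (cov : IsCoveringMap p)
    {x y : X} {γ₀ γ₁ : Path x y} (h : γ₀.Homotopic γ₁) {e₀ e₁ : E} (Γ₀ : Path e₀ e₁)
    (hΓ₀ : ∀ t, p (Γ₀ t) = γ₀ t) : ∃ Γ₁ : Path e₀ e₁, ∀ t, p (Γ₁ t) = γ₁ t := by
  have hx : x = p e₀ := by simpa using (hΓ₀ 0).symm
  have hx₀ : γ₀.toContinuousMap 0 = p e₀ := γ₀.source.trans hx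
  have hx₁ : γ₁.toContinuousMap 0 = p e₀ := γ₁.source.trans hx
  have hΓ₀_eq : Γ₀.toContinuousMap = cov.liftPath γ₀.toContinuousMap e₀ hx₀ :=
    (cov.eq_liftPath_iff' _).2 ⟨funext hΓ₀, Γ₀.source⟩
  have hend : cov.liftPath γ₁.toContinuousMap e₀ hx₁ 1 = e₁ := by
    rw [← cov.liftPath_apply_one_eq_of_homotopicRel h e₀ hx₀ hx₁, ← hΓ₀_eq]
    exact Γ₀.target
  exact ⟨⟨cov.liftPath γ₁.toContinuousMap e₀ hx₁, cov.liftPath_zero .., hend⟩,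
    fun t => congr_fun (cov.liftPath_lifts _ _ hx₁) t⟩

/-- if `p : X̃ → X` is a covering with `X̃` a small loop space, then a loop `α`
at `x ∈ X` is small iff some lift of `α` to `X̃` is a closed loop. -/
theorem small_iff_exists_closed_lift {E X : Type*} [TopologicalSpace E] [TopologicalSpace X]
    (p : C(E, X)) (hp : IsCoveringMap p) (hsurj : Function.Surjective p)
    (hE : IsSmallLoopSpace E) (x : X) (α : Path x x) :
    IsSmall (fromLoop ⟦α⟧) ↔ ∃ (e : E) (alt : Path e e), ∀ t, p (alt t) = α t := by
  constructor
  · intro hα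
    obtain ⟨e, rfl⟩ := hsurj x
    obtain ⟨U, hU, hlift⟩ := hp.isLocalHomeomorph.exists_mem_nhds_forall_loop_lifts e
    obtain ⟨δ, hδU, hδα⟩ := hα U hU
    obtain ⟨Δ, hΔ⟩ := hlift δ hδU
    exact ⟨e, hp.exists_path_lifts_of_homotopic (fromLoop_mk_eq_iff.1 hδα) Δ hΔ⟩
  · rintro ⟨e, Γ, hΓ⟩
    obtain rfl : p e = x := by simpa using hΓ 0
    obtain rfl : Γ.map p.continuous = α := Path.ext (funext hΓ)
    exact (hE.2.2 e _).map p

end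
end

section
/- If p : X̃ → X is a covering map with X̃ a small loop space and p(x̃) = x, then p₋(π₁(X̃, x̃)) is a normal subgroup of π₁(X, x). -/
open CategoryTheory Topology

attribute [local instance] Path.Homotopic.setoid

noncomputable section

variable {X Y E : Type*} [TopologicalSpace X] [TopologicalSpace Y] [TopologicalSpace E]

/-
Given `g ∈ π₁(X, p xt)`, lift a representative of `g` to a path `α` in `E` starting at `xt`.
For a loop `β` at `xt`, the loop `α⁻¹ β α` at the other endpoint of `α` is small because `E` is a
small loop space, and its image represents the conjugate of `p₋ β` by `g`, which is therefore
small. A small class at `p xt` has a representative inside a neighbourhood on which `p` has a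
continuous inverse, so it lifts to a loop at `xt` and lies in the image of `p₋`.
-/

theorem IsSmall.piMap {x : X} {γ : FundamentalGroup X x} (f : C(X, Y)) (hγ : IsSmall γ) :
    IsSmall (piMap f x γ) := by
  intro U hU
  obtain ⟨δ, hδU, rfl⟩ := hγ (f ⁻¹' U) (f.continuous.continuousAt.preimage_mem_nhds hU)
  exact ⟨δ.map f.continuous, hδU, rfl⟩

theorem IsSmall.of_lift (f : C(E, X)) {e : E} {x : X} {δ : Path e e} {γ : Path x x}
    (hlift : ∀ t, f (δ t) = γ t) (hδ : IsSmall (fromLoop ⟦δ⟧)) : IsSmall (fromLoop ⟦γ⟧) := by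
  obtain rfl : f e = x := by rw [← δ.source, hlift, γ.source]
  obtain rfl : δ.map f.continuous = γ := Path.ext (funext hlift)
  exact hδ.piMap f

theorem IsLocalHomeomorph.mem_range_piMap_of_isSmall {p : C(E, X)} (hp : IsLocalHomeomorph p)
    (e : E) {γ : FundamentalGroup X (p e)} (hγ : IsSmall γ) : γ ∈ Set.range (piMap p e) := by
  obtain ⟨φ, he, hφ⟩ := hp e
  have hpe : p e ∈ φ.target := hφ ▸ φ.map_source he
  obtain ⟨δ, hδ, rfl⟩ := hγ φ.target (φ.open_target.mem_nhds hpe)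
  have hsymm : φ.symm (p e) = e := by rw [hφ, φ.left_inv he]
  let lift : Path e e :=
    (δ.map' (φ.continuousOn_symm.mono (Set.range_subset_iff.2 hδ))).cast hsymm.symm hsymm.symm
  refine ⟨fromLoop ⟦lift⟧, congrArg (fun δ => fromLoop ⟦δ⟧) (Path.ext (funext fun t => ?_))⟩
  exact (congrFun hφ _).trans (φ.right_inv (hδ t))

theorem IsCoveringMap.isSmall_conj_piMap {p : C(E, X)} (hp : IsCoveringMap p)
    (hE : ∀ (e : E) (β : FundamentalGroup E e), IsSmall β) {e : E}
    (g : FundamentalGroup X (p e)) (β : FundamentalGroup E e) :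
    IsSmall (g * piMap p e β * g⁻¹) := by
  obtain ⟨g₀, rfl⟩ := Quotient.exists_rep g
  obtain ⟨β₀, rfl⟩ := Quotient.exists_rep β
  obtain ⟨Γ, hΓ, hΓ0⟩ := hp.exists_path_lifts g₀.toContinuousMap e g₀.source
  let α : Path e (Γ 1) := ⟨Γ, hΓ0, rfl⟩
  have hα : ∀ t, p (α t) = g₀ t := congrFun hΓ
  refine IsSmall.of_lift p (δ := α.symm.trans (β₀.trans α))
    (γ := g₀.symm.trans ((β₀.map p.continuous).trans g₀)) (fun t => ?_) (hE _ _)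
  simp only [Path.trans_apply, Path.symm_apply, Path.map_coe, Function.comp_apply]
  split_ifs <;> simp only [hα]

/-- if `p : X̃ → X` is a covering with `X̃` a small loop space and `p xt = x`,
then `p₋(π₁(X̃, xt))` is a normal subgroup of `π₁(X, x)`. -/
theorem range_piMap_normal_of_small_covering {E X : Type*} [TopologicalSpace E]
    [TopologicalSpace X] (p : C(E, X)) (hp : IsCoveringMap p) (hE : IsSmallLoopSpace E)
    (xt : E) :
    ∃ H : Subgroup (FundamentalGroup X (p xt)),
      H.Normal ∧ (H : Set (FundamentalGroup X (p xt))) = Set.range (piMap p xt) := by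
  refine ⟨(FundamentalGroup.map p xt).range, ⟨?_⟩, MonoidHom.coe_range _⟩
  rintro _ ⟨β, rfl⟩ g
  exact hp.isLocalHomeomorph.mem_range_piMap_of_isSmall xt (hp.isSmall_conj_piMap hE.2.2 g β)

end
end

section
/- A small covering p : X̃ → X is a universal object in the category of coverings of X: for every covering q : Ỹ → X with Ỹ path connected, there exists a covering map f : X̃ → Ỹ with q ∘ f = p. -/
/-!
Pick `e₀ ∈ E` and `f₀ ∈ F` over the same point of `X`. By the lifting criterion, `p` lifts to
`f : E → F` with `f e₀ = f₀` once `p_* π₁(E, e₀) ⊆ q_* π₁(F, f₀)`. In a small loop space every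
loop at `e₀` is homotopic to one inside `p⁻¹(U)`, with `U` evenly covered by `q`, and the image
under `p` of such a loop lifts to a loop at `f₀` in the sheet of `q` through `f₀`; so the
inclusion holds. Any continuous `f` with `q ∘ f = p` is then a covering map, as `X` is locally
connected: over a connected open `V` evenly covered by both `p` and `q`, each sheet of `p` is
connected, so `f` maps it homeomorphically onto a single sheet of `q`.
-/

open CategoryTheory Topology

attribute [local instance] Path.Homotopic.setoid

noncomputable section

variable {X Y E : Type*} [TopologicalSpace X] [TopologicalSpace Y] [TopologicalSpace E]

namespace Bundle.Trivialization

open Set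

variable {B Z I : Type*} [TopologicalSpace B] [TopologicalSpace Z] [TopologicalSpace I]
  {proj : Z → B} (t : Trivialization I proj) {s : Set B} {k : I} {z : Z}

def sheet (s : Set B) (k : I) : Set Z := t.source ∩ t ⁻¹' (s ×ˢ {k})

theorem mem_sheet : z ∈ t.sheet s k ↔ z ∈ t.source ∧ proj z ∈ s ∧ (t z).2 = k := by
  simp only [sheet, mem_inter_iff, mem_preimage, mem_prod, mem_singleton_iff]
  exact and_congr_right fun hz => by rw [t.coe_fst hz]

theorem sheet_subset_source : t.sheet s k ⊆ t.source := inter_subset_left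

theorem isOpen_sheet [DiscreteTopology I] (hs : IsOpen s) : IsOpen (t.sheet s k) :=
  t.toOpenPartialHomeomorph.isOpen_inter_preimage (hs.prod (isOpen_discrete _))

theorem injOn_sheet : InjOn proj (t.sheet s k) := fun z hz z' hz' h => by
  rw [mem_sheet] at hz hz'
  refine t.toOpenPartialHomeomorph.injOn hz.1 hz'.1 (Prod.ext ?_ ?_)
  · exact (t.coe_fst hz.1).trans (h.trans (t.coe_fst hz'.1).symm)
  · exact hz.2.2.trans hz'.2.2.symm

theorem symm_mem_sheet (hs : s ⊆ t.baseSet) {b : B} (hb : b ∈ s) :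
    t.toOpenPartialHomeomorph.symm (b, k) ∈ t.sheet s k := by
  rw [mem_sheet, t.mem_source, t.proj_symm_apply' (hs hb), t.apply_symm_apply' (hs hb)]
  exact ⟨hs hb, hb, rfl⟩

theorem sheet_eq_image (hs : s ⊆ t.baseSet) :
    t.sheet s k = (fun b => t.toOpenPartialHomeomorph.symm (b, k)) '' s := by
  refine Subset.antisymm (fun z hz => ?_) (image_subset_iff.2 fun b hb => t.symm_mem_sheet hs hb)
  rw [mem_sheet] at hz
  refine ⟨proj z, hz.2.1, ?_⟩
  simp only [← hz.2.2, t.symm_apply_mk_proj hz.1]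

theorem isPreconnected_sheet (hs : IsPreconnected s) (hsb : s ⊆ t.baseSet) :
    IsPreconnected (t.sheet s k) := by
  rw [t.sheet_eq_image hsb]
  exact hs.image _ (t.toOpenPartialHomeomorph.continuousOn_symm.comp
    (continuousOn_id.prodMk continuousOn_const) fun b hb => t.mem_target.2 (hsb hb))

theorem isOpen_iff_isOpen_image_proj [DiscreteTopology I] (hs : IsOpen s) {A : Set Z}
    (hA : A ⊆ t.sheet s k) : IsOpen A ↔ IsOpen (proj '' A) := by
  refine ⟨fun hAo => ?_, fun hAo => ?_⟩
  · have himg : proj '' A = Prod.fst '' (t '' A) := by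
      rw [image_image]
      exact image_congr fun z hz => (t.coe_fst (t.sheet_subset_source (hA hz))).symm
    rw [himg]
    exact isOpenMap_fst _ (t.toOpenPartialHomeomorph.isOpen_image_of_subset_source hAo
      (hA.trans t.sheet_subset_source))
  · have hA' : A = t.sheet s k ∩ (t.source ∩ proj ⁻¹' (proj '' A)) := by
      refine Subset.antisymm (fun z hz => ⟨hA hz, t.sheet_subset_source (hA hz), z, hz, rfl⟩) ?_
      rintro z ⟨hz, -, z', hz', hzz'⟩
      rwa [t.injOn_sheet hz (hA hz') hzz'.symm]
    rw [hA']
    exact (t.isOpen_sheet hs).inter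
      (t.continuousOn_proj.isOpen_inter_preimage t.open_source hAo)

theorem snd_eq_of_isPreconnected [DiscreteTopology I] {C : Set Z} (hC : IsPreconnected C)
    (hCt : C ⊆ t.source) {z z' : Z} (hz : z ∈ C) (hz' : z' ∈ C) : (t z).2 = (t z').2 :=
  hC.constant
    (continuous_snd.comp_continuousOn (t.toOpenPartialHomeomorph.continuousOn.mono hCt)) hz hz'

theorem exists_loop_lift (t : Trivialization I proj) {b : B} (γ : Path b b)
    (hγ : ∀ s, γ s ∈ t.baseSet) {z : Z} (hz : proj z = b) :
    ∃ Γ : Path z z, ∀ s, proj (Γ s) = γ s := by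
  have hzs : z ∈ t.source := t.mem_source.2 (hz ▸ γ.source ▸ hγ 0)
  have hend {s} (h : γ s = b) : t.toOpenPartialHomeomorph.symm (γ s, (t z).2) = z := by
    rw [h, ← hz, t.symm_apply_mk_proj hzs]
  refine ⟨⟨⟨fun s => t.toOpenPartialHomeomorph.symm (γ s, (t z).2), ?_⟩, hend γ.source,
    hend γ.target⟩, fun s => t.proj_symm_apply' (hγ s)⟩
  exact t.toOpenPartialHomeomorph.continuousOn_symm.comp_continuous
    (γ.continuous.prodMk continuous_const) fun s => t.mem_target.2 (hγ s)

end Bundle.Trivialization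

open Path.Homotopic.Quotient in
theorem FundamentalGroup.map_mem_range_mapOfEq_of_isSmall {F : Type*} [TopologicalSpace F]
    {q : F → X} (hq : IsCoveringMap q) (p : C(E, X)) {e₀ : E} {f₀ : F} (h : q f₀ = p e₀)
    {γ : FundamentalGroup E e₀} (hγ : IsSmall γ) :
    map p e₀ γ ∈ (mapOfEq ⟨q, hq.continuous⟩ h).range := by
  have : Nonempty (q ⁻¹' {p e₀}) := ⟨⟨f₀, h⟩⟩
  set t := (hq (p e₀)).toTrivialization
  obtain ⟨δ, hδt, rfl⟩ := hγ _ ((t.open_baseSet.preimage p.continuous).mem_nhds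
    (hq _).mem_toTrivialization_baseSet)
  obtain ⟨Γ, hΓ⟩ := t.exists_loop_lift (δ.map p.continuous) hδt h
  refine ⟨fromLoop ⟦Γ⟧, ?_⟩
  rw [mapOfEq_apply, map_apply]
  change ((mk Γ).map _).cast _ _ = (mk δ).map p
  rw [← mk_map, ← mk_map, ← mk_cast]
  congr 1
  ext s
  exact hΓ s

open Set in
theorem IsLocalHomeomorph.locallyPathConnectedSpace [LocallyPathConnectedSpace X] {p : E → X}
    (hp : IsLocalHomeomorph p) : LocallyPathConnectedSpace E := by
  refine locallyPathConnectedSpace_iff_pathComponentIn_mem_nhds.2 fun x u hu hxu => ?_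
  obtain ⟨φ, hxφ, rfl⟩ := hp x
  have hφx : φ x ∈ φ '' (u ∩ φ.source) := mem_image_of_mem φ ⟨hxu, hxφ⟩
  set V := pathComponentIn (φ '' (u ∩ φ.source)) (φ x)
  have hVφ : V ⊆ φ '' (u ∩ φ.source) := pathComponentIn_subset
  have hVnhds : V ∈ 𝓝 (φ x) := pathComponentIn_mem_nhds <|
    (φ.isOpen_image_of_subset_source (hu.inter φ.open_source) inter_subset_right).mem_nhds hφx
  have hVt : V ⊆ φ.target :=
    hVφ.trans ((image_mono inter_subset_right).trans φ.image_source_eq_target.subset)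
  refine Filter.mem_of_superset (x := φ.symm '' V) ?_ ?_
  · rw [← φ.left_inv hxφ]
    exact φ.symm.image_mem_nhds (φ.map_source hxφ) hVnhds
  refine ((isPathConnected_pathComponentIn hφx).image' (φ.continuousOn_symm.mono hVt))
    |>.subset_pathComponentIn ⟨φ x, mem_pathComponentIn_self hφx, φ.left_inv hxφ⟩ ?_
  rintro _ ⟨_, hv, rfl⟩
  obtain ⟨x', hx', rfl⟩ := hVφ hv
  rw [φ.left_inv hx'.2]
  exact hx'.1

theorem IsCoveringMap.surjective_s12 {F : Type*} [TopologicalSpace F] [PathConnectedSpace X]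
    [Nonempty F] {q : F → X} (hq : IsCoveringMap q) : Function.Surjective q := fun x => by
  obtain ⟨z⟩ := ‹Nonempty F›
  let γ := PathConnectedSpace.somePath (q z) x
  exact ⟨hq.liftPath γ.toContinuousMap z γ.source 1, by
    simpa using congrFun (hq.liftPath_lifts γ.toContinuousMap z γ.source) 1⟩

section CoveringOfComp

open Set Bundle

variable {F Ip Iq : Type*} [TopologicalSpace F] [TopologicalSpace Ip]
  [TopologicalSpace Iq] [DiscreteTopology Iq] {p : E → X} {q : F → X} {f : E → F}
  (tp : Trivialization Ip p) (tq : Trivialization Iq q) {V : Set X}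

theorem bijOn_sheet_of_comp_eq (hVc : IsPreconnected V) (hVp : V ⊆ tp.baseSet)
    (hVq : V ⊆ tq.baseSet) (hf : Continuous f) (hqf : q ∘ f = p) {k : Ip} {e : E}
    (he : e ∈ tp.sheet V k) : BijOn f (tp.sheet V k) (tq.sheet V (tq (f e)).2) := by
  have hqf' (e : E) : q (f e) = p e := congrFun hqf e
  have hmaps : MapsTo f (tp.sheet V k) (tq.sheet V (tq (f e)).2) := fun e' he' => by
    have hpe' := (tp.mem_sheet.1 he').2.1
    refine tq.mem_sheet.2 ⟨tq.mem_source.2 (hqf' e' ▸ hVq hpe'), hqf' e' ▸ hpe', ?_⟩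
    refine tq.snd_eq_of_isPreconnected ((tp.isPreconnected_sheet hVc hVp).image f hf.continuousOn)
      ?_ (mem_image_of_mem f he') (mem_image_of_mem f he)
    rintro _ ⟨e'', he'', rfl⟩
    exact tq.mem_source.2 (hqf' e'' ▸ hVq (tp.mem_sheet.1 he'').2.1)
  refine ⟨hmaps, (hqf ▸ tp.injOn_sheet : InjOn (q ∘ f) _).of_comp, fun w hw => ?_⟩
  have hqw := (tq.mem_sheet.1 hw).2.1
  have hw' := tp.symm_mem_sheet (k := k) hVp hqw
  refine ⟨_, hw', tq.injOn_sheet (hmaps hw') hw ?_⟩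
  rw [hqf', tp.proj_symm_apply' (hVp hqw)]

theorem exists_mem_fiber_of_mem_sheet (hVc : IsPreconnected V) (hVp : V ⊆ tp.baseSet)
    (hVq : V ⊆ tq.baseSet) (hf : Continuous f) (hqf : q ∘ f = p) {y : F} (hy : q y ∈ V) {e : E}
    (he : f e ∈ tq.sheet V (tq y).2) : ∃ i ∈ f ⁻¹' {y}, e ∈ tp.sheet V (tp i).2 := by
  have hqf' (e : E) : q (f e) = p e := congrFun hqf e
  obtain ⟨-, hpe, hfe⟩ := tq.mem_sheet.1 he
  rw [hqf'] at hpe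
  have hbij := bijOn_sheet_of_comp_eq tp tq hVc hVp hVq hf hqf
    (tp.mem_sheet.2 ⟨tp.mem_source.2 (hVp hpe), hpe, rfl⟩)
  rw [hfe] at hbij
  have he' := tp.symm_mem_sheet (k := (tp e).2) hVp hy
  have hyW : y ∈ tq.sheet V (tq y).2 := tq.mem_sheet.2 ⟨tq.mem_source.2 (hVq hy), hy, rfl⟩
  refine ⟨_, tq.injOn_sheet (hbij.mapsTo he') hyW ?_, ?_⟩
  · rw [hqf', tp.proj_symm_apply' (hVp hy)]
  · rw [tp.apply_symm_apply' (hVp hy)]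
    exact tp.mem_sheet.2 ⟨tp.mem_source.2 (hVp hpe), hpe, rfl⟩

theorem isOpen_iff_isOpen_preimage_inter_sheet [DiscreteTopology Ip] (hVo : IsOpen V)
    (hqf : q ∘ f = p) {k : Ip} {j : Iq} (hbij : BijOn f (tp.sheet V k) (tq.sheet V j))
    {W : Set F} (hW : W ⊆ tq.sheet V j) : IsOpen W ↔ IsOpen (f ⁻¹' W ∩ tp.sheet V k) := by
  have himage : p '' (f ⁻¹' W ∩ tp.sheet V k) = q '' W := calc
    _ = q '' (f '' (f ⁻¹' W ∩ tp.sheet V k)) := by rw [← image_comp, hqf]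
    _ = q '' W := by rw [image_preimage_inter, hbij.image_eq, inter_eq_left.2 hW]
  rw [tq.isOpen_iff_isOpen_image_proj hVo hW,
    tp.isOpen_iff_isOpen_image_proj hVo inter_subset_right, himage]

theorem IsEvenlyCovered.of_comp_eq [DiscreteTopology Ip] (hVo : IsOpen V)
    (hVc : IsPreconnected V) (hVp : V ⊆ tp.baseSet) (hVq : V ⊆ tq.baseSet) (hf : Continuous f)
    (hqf : q ∘ f = p) {y : F} (hy : q y ∈ V) : IsEvenlyCovered f y (f ⁻¹' {y}) := by
  have hqf' (e : E) : q (f e) = p e := congrFun hqf e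
  set W := tq.sheet V (tq y).2
  have hWo : IsOpen W := tq.isOpen_sheet hVo
  have hyW : y ∈ W := tq.mem_sheet.2 ⟨tq.mem_source.2 (hVq hy), hy, rfl⟩
  let U (i : f ⁻¹' {y}) : Set E := tp.sheet V (tp i).2
  have hiU (i : f ⁻¹' {y}) : ↑i ∈ U i := by
    have hpi : p i = q y := by rw [← hqf', i.2]
    exact tp.mem_sheet.2 ⟨tp.mem_source.2 (hpi ▸ hVp hy), hpi ▸ hy, rfl⟩
  have hUW (i : f ⁻¹' {y}) : BijOn f (U i) W := by
    have := bijOn_sheet_of_comp_eq tp tq hVc hVp hVq hf hqf (hiU i)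
    rwa [show f i = y from i.2] at this
  have hcover : ∀ e ∈ f ⁻¹' W, ∃ i, e ∈ U i := fun e he =>
    let ⟨i, hi, hei⟩ := exists_mem_fiber_of_mem_sheet tp tq hVc hVp hVq hf hqf hy he
    ⟨⟨i, hi⟩, hei⟩
  rcases isEmpty_or_nonempty (f ⁻¹' {y}) with hempty | hne
  · exact .of_preimage_eq_empty _ (hWo.mem_nhds hyW)
      (eq_empty_of_forall_notMem fun e he => hempty.false (hcover e he).choose)
  have : DiscreteTopology (f ⁻¹' {y}) := discreteTopology_subtype_iff'.2 fun i hi =>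
    ⟨U ⟨i, hi⟩, tp.isOpen_sheet hVo, Subset.antisymm
      (fun e ⟨he, hfe⟩ => (hUW ⟨i, hi⟩).injOn he (hiU _) (hfe.trans hi.symm))
      (singleton_subset_iff.2 ⟨hiU _, hi⟩)⟩
  have : Nonempty (F → E) := ⟨fun _ => hne.some⟩
  refine .of_trivialization (t := hWo.trivializationDiscrete U W (fun i W' hW' => ?_)
    (fun i => (hUW i).injOn) (fun i => (hUW i).surjOn) (fun i i' hii' => ?_)
    (fun e he => mem_iUnion.2 (hcover e he))) hyW
  · exact isOpen_iff_isOpen_preimage_inter_sheet tp tq hVo hqf (hUW i) hW'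
  · refine disjoint_left.2 fun e hei hei' => hii' ?_
    have hU : U i = U i' := by
      change tp.sheet V _ = tp.sheet V _
      rw [← (tp.mem_sheet.1 hei).2.2, (tp.mem_sheet.1 hei').2.2]
    exact Subtype.ext ((hUW i).injOn (hiU i) (hU ▸ hiU i') (i.2.trans i'.2.symm))

theorem IsCoveringMap.of_comp_eq [LocallyConnectedSpace X] (hp : IsCoveringMap p)
    (hq : IsCoveringMap q) (hf : Continuous f) (hqf : q ∘ f = p) : IsCoveringMap f := by
  intro y
  rcases isEmpty_or_nonempty (p ⁻¹' {q y}) with hempty | hne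
  · obtain ⟨-, U, hU, hUo, -, H, -⟩ := hp (q y)
    refine (IsEvenlyCovered.of_preimage_eq_empty Empty
      ((hUo.preimage hq.continuous).mem_nhds hU) ?_).to_isEvenlyCovered_preimage
    rw [← preimage_comp, hqf]
    exact eq_empty_of_forall_notMem fun e he => hempty.false (H ⟨e, he⟩).2
  have : Nonempty (q ⁻¹' {q y}) := ⟨⟨y, rfl⟩⟩
  have := (hp (q y)).1
  have := (hq (q y)).1
  set tp := (hp (q y)).toTrivialization
  set tq := (hq (q y)).toTrivialization
  have hy : q y ∈ tp.baseSet ∩ tq.baseSet :=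
    ⟨(hp _).mem_toTrivialization_baseSet, (hq _).mem_toTrivialization_baseSet⟩
  exact IsEvenlyCovered.of_comp_eq tp tq
    ((tp.open_baseSet.inter tq.open_baseSet).connectedComponentIn)
    isPreconnected_connectedComponentIn
    ((connectedComponentIn_subset _ _).trans inter_subset_left)
    ((connectedComponentIn_subset _ _).trans inter_subset_right) hf hqf
    (mem_connectedComponentIn hy)

end CoveringOfComp

/-- a small covering `p : X̃ → X` is a universal object in the category of
coverings of `X`: every covering `q : Ỹ → X` with `Ỹ` path connected is factored through by
a covering map `f : X̃ → Ỹ` with `q ∘ f = p`. -/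
theorem small_covering_is_universal {E X F : Type*} [TopologicalSpace E] [TopologicalSpace X]
    [TopologicalSpace F] [PathConnectedSpace X] [LocallyPathConnectedSpace X]
    [PathConnectedSpace F]
    (p : C(E, X)) (hp : IsCoveringMap p) (hE : IsSmallLoopSpace E)
    (q : C(F, X)) (hq : IsCoveringMap q) :
    ∃ f : C(E, F), IsCoveringMap f ∧ ∀ e : E, q (f e) = p e := by
  obtain ⟨hEpc, -, hsmall⟩ := hE
  have := hEpc
  have := hp.isLocalHomeomorph.locallyPathConnectedSpace
  obtain ⟨e₀⟩ := hEpc.nonempty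
  obtain ⟨f₀, hf₀⟩ := hq.surjective_s12 (p e₀)
  obtain ⟨f, ⟨-, hfq⟩, -⟩ := hq.existsUnique_continuousMap_lifts_of_range_le (f := p) hf₀ <| by
    rintro _ ⟨γ, rfl⟩
    exact FundamentalGroup.map_mem_range_mapOfEq_of_isSmall hq p hf₀ (hsmall e₀ γ)
  exact ⟨f, hp.of_comp_eq hq f.continuous hfq, congrFun hfq⟩
end
end

section
/- If X is a path-connected semi-locally small loop space, then the small loop groups at any two points are isomorphic: π₁ˢ(X,x) ≅ π₁ˢ(X,y) for all x, y ∈ X, via conjugation by a path class from x to y. -/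
open CategoryTheory Topology

attribute [local instance] Path.Homotopic.setoid

noncomputable section

variable {X Y E : Type*} [TopologicalSpace X] [TopologicalSpace Y] [TopologicalSpace E]

/-! The map `[β] ↦ [α⁻¹ * β * α]` is Mathlib's change-of-basepoint isomorphism
`fundamentalGroupMulEquivOfPath α`, which depends only on the homotopy class of `α` and is
functorial under concatenation. If `U` is a neighbourhood as in `SemiLocallySmallLoop`, the small
classes at points of `U` are exactly the classes of loops in `U`, and conjugating a loop in `U` by
a path in `U` gives a loop in `U`; so paths inside such a `U` preserve smallness. A Lebesgue
number for the cover of `[0, 1]` by the preimages of these neighbourhoods cuts `α` into subpaths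
each lying in one of them, and `α` is homotopic to their concatenation. The inverse map is
conjugation along `α.symm`, which preserves smallness for the same reason. -/

open FundamentalGroup Set

section ChangeOfBasepoint

variable {a b c : X}

theorem conjPath_symm_eq_fundamentalGroupMulEquivOfPath (σ : Path a b) :
    conjPath σ.symm = fundamentalGroupMulEquivOfPath σ := by
  funext γ
  simp only [fundamentalGroupMulEquivOfPath, Iso.conj_apply, conjPath, Path.symm_symm]
  exact Category.assoc (⟦σ.symm⟧ : FundamentalGroupoid.mk b ⟶ FundamentalGroupoid.mk a) γ ⟦σ⟧

theorem fundamentalGroupMulEquivOfPath_trans (σ : Path a b) (τ : Path b c) :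
    fundamentalGroupMulEquivOfPath (σ.trans τ) =
      (fundamentalGroupMulEquivOfPath σ).trans (fundamentalGroupMulEquivOfPath τ) := by
  have : (Groupoid.isoEquivHom _ _).symm (FundamentalGroupoid.fromPath ⟦σ.trans τ⟧) =
      (Groupoid.isoEquivHom _ _).symm (FundamentalGroupoid.fromPath ⟦σ⟧) ≪≫
        (Groupoid.isoEquivHom _ _).symm (FundamentalGroupoid.fromPath ⟦τ⟧) :=
    Iso.ext rfl
  ext γ
  rw [fundamentalGroupMulEquivOfPath, this]
  exact Iso.trans_conj _ _ γ

theorem fundamentalGroupMulEquivOfPath_symm (σ : Path a b) :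
    (fundamentalGroupMulEquivOfPath σ).symm = fundamentalGroupMulEquivOfPath σ.symm := by
  have : (Groupoid.isoEquivHom _ _).symm (FundamentalGroupoid.fromPath ⟦σ.symm⟧) =
      ((Groupoid.isoEquivHom _ _).symm (FundamentalGroupoid.fromPath ⟦σ⟧)).symm :=
    Iso.ext rfl
  ext γ
  rw [MulEquiv.symm_apply_eq, fundamentalGroupMulEquivOfPath, fundamentalGroupMulEquivOfPath,
    this, Iso.self_symm_conj]

theorem fundamentalGroupMulEquivOfPath_congr {σ τ : Path a b} (h : σ.Homotopic τ) :
    fundamentalGroupMulEquivOfPath σ = fundamentalGroupMulEquivOfPath τ := by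
  rw [fundamentalGroupMulEquivOfPath, fundamentalGroupMulEquivOfPath, Quotient.sound h]

end ChangeOfBasepoint

section SmallLoops

variable {a b : X}

theorem mapsTo_fundamentalGroupMulEquivOfPath_loopsIn {U : Set X} (σ : Path a b)
    (hσ : range σ ⊆ U) :
    MapsTo (fundamentalGroupMulEquivOfPath σ) (loopsIn U a) (loopsIn U b) := by
  rintro _ ⟨δ, hδ, rfl⟩
  refine ⟨σ.symm.trans (δ.trans σ), fun t ↦ ?_, rfl⟩
  have hrange : range (σ.symm.trans (δ.trans σ)) ⊆ U := by
    simp only [Path.trans_range, Path.symm_range, union_subset_iff]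
    exact ⟨hσ, range_subset_iff.2 hδ, hσ⟩
  exact hrange (mem_range_self t)

theorem mapsTo_fundamentalGroupMulEquivOfPath_smallSet_of_range_subset {U : Set X}
    (hU : ∀ z ∈ U, loopsIn U z = smallSet X z) (σ : Path a b) (hσ : range σ ⊆ U) :
    MapsTo (fundamentalGroupMulEquivOfPath σ) (smallSet X a) (smallSet X b) := by
  rw [← hU a (hσ ⟨0, σ.source⟩), ← hU b (hσ ⟨1, σ.target⟩)]
  exact mapsTo_fundamentalGroupMulEquivOfPath_loopsIn σ hσ

theorem mapsTo_fundamentalGroupMulEquivOfPath_cast_iff {a' b' : X} (σ : Path a b)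
    (ha : a' = a) (hb : b' = b) :
    MapsTo (fundamentalGroupMulEquivOfPath (σ.cast ha hb)) (smallSet X a') (smallSet X b') ↔
      MapsTo (fundamentalGroupMulEquivOfPath σ) (smallSet X a) (smallSet X b) := by
  subst ha hb
  rfl

theorem mapsTo_fundamentalGroupMulEquivOfPath_smallSet (hX : SemiLocallySmallLoop X)
    (σ : Path a b) :
    MapsTo (fundamentalGroupMulEquivOfPath σ) (smallSet X a) (smallSet X b) := by
  choose U hU_open hU_mem hU using hX
  obtain ⟨t, ht_zero, ht_mono, ⟨n, ht_one⟩, ht_sub⟩ :=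
    exists_monotone_Icc_subset_open_cover_unitInterval
      (fun z ↦ (hU_open z).preimage σ.continuous)
      (fun s _ ↦ mem_iUnion.2 ⟨σ s, hU_mem (σ s)⟩)
  have h_subpath : ∀ m, MapsTo (fundamentalGroupMulEquivOfPath (σ.subpath 0 (t m)))
      (smallSet X (σ 0)) (smallSet X (σ (t m))) := by
    intro m
    induction m with
    | zero =>
      rw [ht_zero, Path.subpath_self]
      exact mapsTo_fundamentalGroupMulEquivOfPath_smallSet_of_range_subset (hU (σ 0)) _
        (by simpa only [Path.refl_range, singleton_subset_iff] using hU_mem (σ 0))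
    | succ m ih =>
      obtain ⟨z, hz⟩ := ht_sub m
      rw [← fundamentalGroupMulEquivOfPath_congr
          ⟨Path.Homotopy.subpathTransSubpath σ 0 (t m) (t (m + 1))⟩,
        fundamentalGroupMulEquivOfPath_trans, MulEquiv.coe_trans]
      refine MapsTo.comp ?_ ih
      refine mapsTo_fundamentalGroupMulEquivOfPath_smallSet_of_range_subset (hU z) _ ?_
      rw [Path.range_subpath_of_le _ _ _ (ht_mono m.le_succ)]
      exact image_subset_iff.2 hz
  have h_one := h_subpath n
  rwa [ht_one n le_rfl, Path.subpath_zero_one,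
    mapsTo_fundamentalGroupMulEquivOfPath_cast_iff] at h_one

end SmallLoops

theorem small_groups_isomorphic_of_semiLocallySmallLoop_general (X : Type*) [TopologicalSpace X]
    (hX : SemiLocallySmallLoop X) (x y : X) (α : Path x y) :
    Set.BijOn (conjPath α.symm) (smallSet X x) (smallSet X y) := by
  rw [conjPath_symm_eq_fundamentalGroupMulEquivOfPath]
  refine (fundamentalGroupMulEquivOfPath α).toEquiv.bijOn'
    (mapsTo_fundamentalGroupMulEquivOfPath_smallSet hX α) ?_
  have h_symm := mapsTo_fundamentalGroupMulEquivOfPath_smallSet hX α.symm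
  rwa [← fundamentalGroupMulEquivOfPath_symm] at h_symm

/-- in a path-connected semi-locally small loop space the small loop groups at
any two points are isomorphic via conjugation by a path class: `[β] ↦ [α⁻¹ * β * α]` is a
bijection from `π₁ˢ(X,x)` onto `π₁ˢ(X,y)`. -/
theorem small_groups_isomorphic_of_semiLocallySmallLoop (X : Type*) [TopologicalSpace X]
    [PathConnectedSpace X] (hX : SemiLocallySmallLoop X) (x y : X) (α : Path x y) :
    Set.BijOn (conjPath α.symm) (smallSet X x) (smallSet X y) :=
  small_groups_isomorphic_of_semiLocallySmallLoop_general X hX x y α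

end
end
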